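/- arXiv:1508.04726 — 2 statements merged into one kernel-verified Lean document; each statement's English description precedes it below -/
import Mathlib

section
/- Let σ_N > 0 and σ_S > 0. Then for every y > 0, the marginal output density satisfies p_Y(y) := ∫₀^∞ p_{Y|X}(y|x) · p_X(x) dx = (2y/σ_S²) · ( exp(−y²/(σ_N² + σ_S²)) − exp(−y²/σ_N²) ). -/
open Real MeasureTheory Set Filter

/-- Modified Bessel function of the first kind of order one,
`I₁(z) = ∑_{k=0}^∞ (z/2)^(2k+1) / (k! (k+1)!)`. -/
noncomputable def besselI1 (z : ℝ) : ℝ :=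
  ∑' k : ℕ, (z / 2) ^ (2 * k + 1) / ((Nat.factorial k : ℝ) * (Nat.factorial (k + 1) : ℝ))

/-- Modified Bessel function of the second kind of order one,
`K₁(z) = ∫₀^∞ exp (−z cosh t) cosh t dt`. -/
noncomputable def besselK1 (z : ℝ) : ℝ :=
  ∫ t in Ioi (0 : ℝ), Real.exp (-z * Real.cosh t) * Real.cosh t

/-- Digamma function `ψ(x) = d/dx log Γ(x)`. -/
noncomputable def digamma (x : ℝ) : ℝ :=
  deriv (fun y : ℝ => Real.log (Real.Gamma y)) x

/-- Conditional output density of the noncentral chi channel with four degrees of freedom. -/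
noncomputable def condDensity (σN x y : ℝ) : ℝ :=
  (2 / σN ^ 2) * (y ^ 2 / x) * Real.exp (-(x ^ 2 + y ^ 2) / σN ^ 2) *
    besselI1 (2 * x * y / σN ^ 2)

/-- Rayleigh input density with mean-square `σS²`. -/
noncomputable def rayleighDensity (σS x : ℝ) : ℝ :=
  (2 * x / σS ^ 2) * Real.exp (-x ^ 2 / σS ^ 2)

/-- `F(ρ) = ∫₀^∞ ξ K₁(√(1+ρ⁻¹) ξ) I₁(ξ) log I₁(ξ) dξ`. -/
noncomputable def Fint (ρ : ℝ) : ℝ :=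
  ∫ ξ in Ioi (0 : ℝ),
    ξ * besselK1 (Real.sqrt (1 + ρ⁻¹) * ξ) * besselI1 ξ * Real.log (besselI1 ξ)

/-- Closed-form mutual information of Theorem 1. -/
noncomputable def Ixy (ρ : ℝ) : ℝ :=
  Real.log (ρ * Real.sqrt (1 + ρ⁻¹)) + ρ⁻¹ * Real.log (Real.sqrt (1 + ρ)) - ρ +
    ρ⁻¹ * Real.sqrt (1 + ρ⁻¹) * Fint ρ + digamma ρ⁻¹ - digamma 1 - 1

lemma gaussian_moment_integrable {a : ℝ} (ha : 0 < a) (k : ℕ) :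
    IntegrableOn (fun x : ℝ => x ^ (2*k+1) * Real.exp (-a * x^2)) (Ioi 0) := by
  refine (integrableOn_rpow_mul_exp_neg_mul_sq ha (s := (2*k+1 : ℕ))
    (by have := Nat.cast_nonneg (α := ℝ) (2*k+1); linarith)).congr_fun (fun x hx => ?_) measurableSet_Ioi
  simp only [Real.rpow_natCast]

lemma gaussian_moment {a : ℝ} (ha : 0 < a) (k : ℕ) :
    ∫ x in Ioi (0:ℝ), x ^ (2*k+1) * Real.exp (-a * x^2)
      = (k.factorial : ℝ) / (2 * a^(k+1)) := by
  have h1 : ∫ x in Ioi (0:ℝ), x ^ (2*k+1) * Real.exp (-a * x^2)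
      = ∫ x in Ioi (0:ℝ), x ^ ((2*k+1 : ℕ) : ℝ) * Real.exp (-a * x ^ (2:ℝ)) := by
    refine setIntegral_congr_fun measurableSet_Ioi (fun x hx => ?_)
    rw [Real.rpow_natCast, Real.rpow_two]
  rw [h1, integral_rpow_mul_exp_neg_mul_rpow two_pos (by push_cast; linarith) ha]
  have h2 : (((2*k+1 : ℕ) : ℝ) + 1) / 2 = (k + 1 : ℕ) := by push_cast; ring
  rw [h2, show ((k+1:ℕ):ℝ) = (k:ℝ)+1 by push_cast; ring, Real.Gamma_nat_eq_factorial]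
  rw [show -(((2*k+1:ℕ):ℝ)+1)/2 = -((k+1:ℕ):ℝ) by push_cast; ring,
    Real.rpow_neg ha.le, Real.rpow_natCast]
  ring

lemma tsum_pow_div_factorial_succ {r : ℝ} (hr : r ≠ 0) :
    ∑' k : ℕ, r ^ k / ((k+1).factorial : ℝ) = (Real.exp r - 1) / r := by
  have hs : Summable (fun n : ℕ => r ^ n / (n.factorial : ℝ)) :=
    Real.summable_pow_div_factorial r
  have hexp : Real.exp r = ∑' n : ℕ, r ^ n / (n.factorial : ℝ) := by
    rw [Real.exp_eq_exp_ℝ, NormedSpace.exp_eq_tsum_div]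
  rw [Summable.tsum_eq_zero_add hs] at hexp
  simp only [pow_zero, Nat.factorial_zero, Nat.cast_one, div_one] at hexp
  have : ∑' k : ℕ, r ^ (k+1) / ((k+1).factorial : ℝ)
      = r * ∑' k : ℕ, r ^ k / ((k+1).factorial : ℝ) := by
    rw [← tsum_mul_left]
    exact tsum_congr fun k => by rw [pow_succ]; ring
  rw [this] at hexp
  field_simp
  linarith [hexp]

/-- closed form for the marginal output density under Rayleigh input. -/
theorem stmt_2 (σN σS : ℝ) (hσN : 0 < σN) (hσS : 0 < σS) (y : ℝ) (hy : 0 < y) :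
    ∫ x in Ioi (0 : ℝ), condDensity σN x y * rayleighDensity σS x =
      (2 * y / σS ^ 2) *
        (Real.exp (-y ^ 2 / (σN ^ 2 + σS ^ 2)) - Real.exp (-y ^ 2 / σN ^ 2)) := by
  have hN2 : (0:ℝ) < σN^2 := by positivity
  have hS2 : (0:ℝ) < σS^2 := by positivity
  have hN2' : (σN:ℝ)^2 ≠ 0 := ne_of_gt hN2
  have hS2' : (σS:ℝ)^2 ≠ 0 := ne_of_gt hS2
  have hy0 : y ≠ 0 := ne_of_gt hy
  set a : ℝ := 1/σN^2 + 1/σS^2 with ha_def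
  have ha : 0 < a := by rw [ha_def]; positivity
  have ha0 : a ≠ 0 := ne_of_gt ha
  set C : ℝ := 4*y^2/(σN^2*σS^2) * Real.exp (-y^2/σN^2) with hC_def
  have hCpos : 0 < C := by rw [hC_def]; positivity
  set r : ℝ := (y/σN^2)^2 / a with hr_def
  have hrpos : 0 < r := by rw [hr_def]; positivity
  have hr0 : r ≠ 0 := ne_of_gt hrpos
  set K : ℕ → ℝ := fun k =>
    C * (y/σN^2)^(2*k+1) / ((k.factorial:ℝ) * ((k+1).factorial:ℝ)) with hK_def
  clear_value a C r K
  have hKpos : ∀ k, 0 < K k := by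
    intro k
    rw [hK_def]
    have h1 : (0:ℝ) < (k.factorial:ℝ) := by exact_mod_cast k.factorial_pos
    have h2 : (0:ℝ) < ((k+1).factorial:ℝ) := by exact_mod_cast (k+1).factorial_pos
    exact div_pos (mul_pos hCpos (pow_pos (div_pos hy hN2) _)) (mul_pos h1 h2)
  -- pointwise expansion
  have key : ∀ x ∈ Ioi (0:ℝ), condDensity σN x y * rayleighDensity σS x
      = ∑' k : ℕ, K k * (x^(2*k+1) * Real.exp (-a*x^2)) := by
    intro x hx
    have hx0 : (x:ℝ) ≠ 0 := ne_of_gt hx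
    have e1 : Real.exp (-(x^2+y^2)/σN^2)
        = Real.exp (-y^2/σN^2) * Real.exp (-x^2/σN^2) := by
      rw [← Real.exp_add]; congr 1; field_simp; ring
    have e2 : Real.exp (-a*x^2)
        = Real.exp (-x^2/σN^2) * Real.exp (-x^2/σS^2) := by
      rw [← Real.exp_add]; congr 1; rw [ha_def]; field_simp; ring
    have h1 : ∀ k : ℕ, K k * (x^(2*k+1) * Real.exp (-a*x^2))
        = ((2 / σN ^ 2) * (y ^ 2 / x) * Real.exp (-(x ^ 2 + y ^ 2) / σN ^ 2)
            * ((2 * x / σS ^ 2) * Real.exp (-x ^ 2 / σS ^ 2)))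
          * ((2 * x * y / σN ^ 2 / 2) ^ (2 * k + 1)
              / ((k.factorial:ℝ) * ((k+1).factorial:ℝ))) := by
      intro k
      have hfk : ((k.factorial:ℝ)) ≠ 0 := by exact_mod_cast k.factorial_ne_zero
      have hfk1 : (((k+1).factorial:ℝ)) ≠ 0 := by exact_mod_cast (k+1).factorial_ne_zero
      rw [hK_def, hC_def, e1, e2,
        show 2 * x * y / σN ^ 2 / 2 = x * (y/σN^2) by ring, mul_pow]
      field_simp
      ring
    rw [tsum_congr h1, tsum_mul_left]
    simp only [condDensity, rayleighDensity, besselI1]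
    ring
  rw [setIntegral_congr_fun measurableSet_Ioi key]
  -- swap sum and integral
  have hint : ∀ k : ℕ, Integrable
      (fun x => K k * (x^(2*k+1) * Real.exp (-a*x^2))) (volume.restrict (Ioi 0)) :=
    fun k => (gaussian_moment_integrable ha k).const_mul (K k)
  have hnorm : ∀ k : ℕ,
      (∫ x in Ioi (0:ℝ), ‖K k * (x^(2*k+1) * Real.exp (-a*x^2))‖)
        = K k * ((k.factorial : ℝ) / (2 * a^(k+1))) := by
    intro k
    have : ∀ x ∈ Ioi (0:ℝ), ‖K k * (x^(2*k+1) * Real.exp (-a*x^2))‖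
        = K k * (x^(2*k+1) * Real.exp (-a*x^2)) := by
      intro x hx
      have hxp : (0:ℝ) < x := hx
      have := (hKpos k).le
      rw [Real.norm_eq_abs, abs_of_nonneg (by positivity)]
    rw [setIntegral_congr_fun measurableSet_Ioi this, integral_const_mul,
      gaussian_moment ha k]
  have hterm : ∀ k : ℕ, K k * ((k.factorial : ℝ) / (2 * a^(k+1)))
      = (C * (y/σN^2) / (2*a)) * (r^k / ((k+1).factorial : ℝ)) := by
    intro k
    have hfk : ((k.factorial:ℝ)) ≠ 0 := by exact_mod_cast k.factorial_ne_zero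
    have hfk1 : (((k+1).factorial:ℝ)) ≠ 0 := by exact_mod_cast (k+1).factorial_ne_zero
    simp only [hK_def, hr_def]
    rw [pow_add, pow_mul, pow_one, pow_succ, div_pow]
    field_simp [ha0, hfk, hfk1]
    ring_nf
    rw [mul_assoc _ (a ^ k), ← mul_pow, mul_inv_cancel₀ ha0, one_pow, mul_one]
  have hsummable : Summable (fun k : ℕ =>
      (C * (y/σN^2) / (2*a)) * (r^k / ((k+1).factorial : ℝ))) := by
    have hfac : ∀ k : ℕ, (0:ℝ) < ((k+1).factorial : ℝ) :=
      fun k => by exact_mod_cast (k+1).factorial_pos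
    refine Summable.mul_left _ ?_
    refine Summable.of_nonneg_of_le
      (fun k => (div_pos (pow_pos hrpos k) (hfac k)).le) (fun k => ?_)
      (Real.summable_pow_div_factorial r)
    have h3 : ((k.factorial:ℝ)) ≤ ((k+1).factorial:ℝ) := by
      exact_mod_cast Nat.factorial_le (Nat.le_succ k)
    have h4 : (0:ℝ) < (k.factorial:ℝ) := by exact_mod_cast k.factorial_pos
    exact div_le_div_of_nonneg_left (pow_pos hrpos k).le h4 h3
  have hsum : Summable fun k : ℕ =>
      ∫ x in Ioi (0:ℝ), ‖K k * (x^(2*k+1) * Real.exp (-a*x^2))‖ := by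
    refine (hsummable.congr fun k => ?_)
    rw [hnorm k, hterm k]
  rw [← MeasureTheory.integral_tsum_of_summable_integral_norm hint hsum]
  have hval : ∀ k : ℕ, (∫ x in Ioi (0:ℝ), K k * (x^(2*k+1) * Real.exp (-a*x^2)))
      = (C * (y/σN^2) / (2*a)) * (r^k / ((k+1).factorial : ℝ)) := by
    intro k
    rw [integral_const_mul, gaussian_moment ha k, hterm k]
  rw [tsum_congr hval, tsum_mul_left, tsum_pow_div_factorial_succ hr0]
  -- final algebra
  have hre : Real.exp (-y^2/σN^2) * Real.exp r = Real.exp (-y ^ 2 / (σN ^ 2 + σS ^ 2)) := by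
    rw [← Real.exp_add]; congr 1
    rw [hr_def, ha_def]
    have hsum2 : (σN:ℝ)^2 + σS^2 ≠ 0 := by positivity
    field_simp
    ring
  have h9 : (1/σN^2 + 1/σS^2 : ℝ) ≠ 0 := ne_of_gt (by positivity)
  have hC2 : C * (y/σN^2) / (2*a*r) = 2*y/σS^2 * Real.exp (-y^2/σN^2) := by
    rw [hr_def, hC_def, ha_def]
    field_simp
    ring
  rw [← hre]
  linear_combination (Real.exp r - 1) * hC2
end

section
/- For every ρ > 0, the function ξ ↦ ξ · K₁(√(1 + ρ⁻¹) · ξ) · I₁(ξ) · log I₁(ξ) is (Lebesgue) integrable on (0, ∞); in particular the quantity F(ρ) = ∫₀^∞ ξ · K₁(√(1 + ρ⁻¹) · ξ) · I₁(ξ) · log I₁(ξ) dξ is well defined and finite. -/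
open Real MeasureTheory Set Filter

set_option maxHeartbeats 1000000


lemma fact_ineq (k : ℕ) :
    (Nat.factorial (2 * k + 1) : ℝ) ≤ 2 ^ (2 * k + 1) * (Nat.factorial k) * (Nat.factorial (k+1)) := by
  have h1 : Nat.choose (2*k+1) k * Nat.factorial k * Nat.factorial (k+1) = Nat.factorial (2*k+1) := by
    have := Nat.choose_mul_factorial_mul_factorial (show k ≤ 2*k+1 by omega)
    simpa [show 2*k+1-k = k+1 by omega] using this
  have h2 : Nat.choose (2*k+1) k ≤ 2 ^ (2*k+1) := by
    calc Nat.choose (2*k+1) k ≤ ∑ i ∈ Finset.range (2*k+1+1), Nat.choose (2*k+1) i :=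
          Finset.single_le_sum (fun i _ => Nat.zero_le _) (by simp; omega)
      _ = 2 ^ (2*k+1) := Nat.sum_range_choose _
  have : Nat.factorial (2*k+1) ≤ 2 ^ (2*k+1) * Nat.factorial k * Nat.factorial (k+1) := by
    rw [← h1]
    exact Nat.mul_le_mul_right _ (Nat.mul_le_mul_right _ h2)
  exact_mod_cast this

lemma besselI1_summable (z : ℝ) :
    Summable fun k : ℕ => (z / 2) ^ (2 * k + 1) / ((Nat.factorial k : ℝ) * (Nat.factorial (k + 1) : ℝ)) := by
  have hs : Summable fun k : ℕ => |z| ^ (2 * k + 1) / (Nat.factorial (2 * k + 1) : ℝ) :=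
    (Real.summable_pow_div_factorial |z|).comp_injective (fun a b h => by omega)
  refine Summable.of_norm (hs.of_nonneg_of_le (fun k => by positivity) fun k => ?_)
  have hfk : (0:ℝ) < (Nat.factorial k : ℝ) * (Nat.factorial (k+1) : ℝ) := by positivity
  rw [norm_div, norm_pow]
  have : ‖z / 2‖ = |z| / 2 := by rw [norm_div]; simp
  rw [this, div_pow, norm_of_nonneg hfk.le]
  rw [div_div]
  apply div_le_div_of_nonneg_left (by positivity) (by positivity)
  calc (Nat.factorial (2*k+1) : ℝ) ≤ 2 ^ (2*k+1) * (Nat.factorial k) * (Nat.factorial (k+1)) := fact_ineq k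
    _ = (2:ℝ)^(2*k+1) * ((Nat.factorial k) * (Nat.factorial (k+1))) := by ring


lemma besselI1_ge (z : ℝ) (hz : 0 ≤ z) : z / 2 ≤ besselI1 z := by
  have h := Summable.le_tsum (besselI1_summable z) 0 (fun j _ => by positivity)
  rw [besselI1]
  simpa [Nat.factorial] using h

lemma besselI1_le_exp (z : ℝ) (hz : 0 ≤ z) : besselI1 z ≤ Real.exp z := by
  have hexp : Real.exp z = ∑' n : ℕ, z ^ n / (Nat.factorial n : ℝ) := by
    rw [Real.exp_eq_exp_ℝ, NormedSpace.exp_eq_tsum_div]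
  rw [hexp]
  refine Summable.tsum_le_tsum_of_inj (fun k => 2 * k + 1) (fun a b h => by simpa using h : Function.Injective fun k : ℕ => 2 * k + 1)
    (fun n _ => by positivity) (fun k => ?_) (besselI1_summable z)
    (Real.summable_pow_div_factorial z)
  have hfk : (0:ℝ) < (Nat.factorial k : ℝ) * (Nat.factorial (k+1) : ℝ) := by positivity
  rw [div_pow, div_div]
  apply div_le_div_of_nonneg_left (by positivity) (by positivity)
  calc (Nat.factorial (2*k+1) : ℝ) ≤ 2 ^ (2*k+1) * (Nat.factorial k) * (Nat.factorial (k+1)) := fact_ineq k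
    _ = (2:ℝ)^(2*k+1) * ((Nat.factorial k) * (Nat.factorial (k+1))) := by ring

lemma besselI1_monotone : Monotone besselI1 := by
  intro x y hxy
  refine Summable.tsum_le_tsum (fun k => ?_) (besselI1_summable x) (besselI1_summable y)
  have hodd : Odd (2 * k + 1) := ⟨k, by ring⟩
  have : (x/2) ^ (2*k+1) ≤ (y/2) ^ (2*k+1) :=
    (hodd.strictMono_pow (R := ℝ)).monotone (by linarith)
  have hfk : (0:ℝ) < (Nat.factorial k : ℝ) * (Nat.factorial (k+1) : ℝ) := by positivity
  gcongr


lemma cosh_lower (t : ℝ) : 1 + t ^ 2 / 4 ≤ Real.cosh t := by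
  rw [← Real.cosh_abs, Real.cosh_eq]
  have h1 : 1 + |t| + t ^ 2 / 2 ≤ Real.exp |t| := by
    have := Real.sum_le_exp_of_nonneg (abs_nonneg t) 3
    simp [Finset.sum_range_succ, Nat.factorial] at this
    nlinarith [sq_abs t]
  have h2 : 1 - |t| ≤ Real.exp (-|t|) := by
    have := Real.add_one_le_exp (-|t|)
    linarith
  nlinarith [sq_abs t, abs_nonneg t]

lemma self_le_cosh (t : ℝ) : t ≤ Real.cosh t := by
  have := cosh_lower t
  nlinarith [sq_nonneg (t - 2)]

lemma tendsto_cosh_atTop : Tendsto Real.cosh atTop atTop :=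
  tendsto_atTop_mono self_le_cosh tendsto_id

lemma sinh_integral (z : ℝ) (hz : 0 < z) :
    IntegrableOn (fun t => Real.exp (-z * Real.cosh t) * Real.sinh t) (Ioi 0) volume ∧
    (∫ t in Ioi (0:ℝ), Real.exp (-z * Real.cosh t) * Real.sinh t) = Real.exp (-z) / z := by
  have hderiv : ∀ x ∈ Ici (0:ℝ), HasDerivAt (fun t => -(1/z) * Real.exp (-z * Real.cosh t))
      (Real.exp (-z * Real.cosh x) * Real.sinh x) x := by
    intro x _
    have h1 : HasDerivAt (fun t : ℝ => -z * Real.cosh t) (-z * Real.sinh x) x :=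
      (Real.hasDerivAt_cosh x).const_mul (-z)
    have h2 := (h1.exp).const_mul (-(1/z))
    refine h2.congr_deriv ?_
    field_simp
  have hpos : ∀ x ∈ Ioi (0:ℝ), 0 ≤ Real.exp (-z * Real.cosh x) * Real.sinh x := by
    intro x hx
    have : 0 ≤ Real.sinh x := le_of_lt (Real.sinh_pos_iff.mpr hx)
    positivity
  have hlim : Tendsto (fun t => -(1/z) * Real.exp (-z * Real.cosh t)) atTop (nhds 0) := by
    have h1 : Tendsto (fun t : ℝ => -z * Real.cosh t) atTop atBot := by
      have hz' : Tendsto (fun t : ℝ => z * Real.cosh t) atTop atTop :=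
        tendsto_cosh_atTop.const_mul_atTop hz
      refine tendsto_neg_atBot_iff.mpr hz' |>.congr fun t => by ring
    have := (Real.tendsto_exp_atBot.comp h1).const_mul (-(1/z))
    simpa using this
  constructor
  · exact integrableOn_Ioi_deriv_of_nonneg' hderiv hpos hlim
  · have := integral_Ioi_of_hasDerivAt_of_nonneg' hderiv hpos hlim
    rw [this]
    simp [Real.cosh_zero]
    field_simp


lemma integral_exp_neg_mul (b : ℝ) (hb : 0 < b) :
    (∫ t in Ioi (0:ℝ), Real.exp (-b * t)) = 1 / b := by
  have hderiv : ∀ x ∈ Ici (0:ℝ), HasDerivAt (fun t => -(1/b) * Real.exp (-b * t))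
      (Real.exp (-b * x)) x := by
    intro x _
    have h1 : HasDerivAt (fun t : ℝ => -b * t) (-b) x := by
      simpa using (hasDerivAt_id x).const_mul (-b)
    have h2 := (h1.exp).const_mul (-(1/b))
    refine h2.congr_deriv ?_
    field_simp
  have hpos : ∀ x ∈ Ioi (0:ℝ), 0 ≤ Real.exp (-b * x) := fun x _ => (Real.exp_pos _).le
  have hlim : Tendsto (fun t => -(1/b) * Real.exp (-b * t)) atTop (nhds 0) := by
    have h1 : Tendsto (fun t : ℝ => -b * t) atTop atBot := by
      have := tendsto_id (α := ℝ) |>.const_mul_atTop hb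
      refine (tendsto_neg_atBot_iff.mpr this).congr fun t => by simp [id]
    have := (Real.tendsto_exp_atBot.comp h1).const_mul (-(1/b))
    simpa using this
  have := integral_Ioi_of_hasDerivAt_of_nonneg' hderiv hpos hlim
  rw [this]; simp

/-- pointwise bound for the "1" part -/
lemma exp_cosh_bound (z t : ℝ) (hz : 0 < z) (ht : 0 ≤ t) :
    Real.exp (-z * Real.cosh t) ≤ 3 * Real.exp (-z) * Real.exp (-(Real.sqrt z) * t) := by
  have hs : Real.sqrt z ^ 2 = z := Real.sq_sqrt hz.le
  have hss : 0 ≤ Real.sqrt z := Real.sqrt_nonneg z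
  have key : -z * Real.cosh t ≤ 1 + -z + -(Real.sqrt z) * t := by
    have h1 := cosh_lower t
    have h2 : Real.sqrt z * t ≤ z * t ^ 2 / 4 + 1 := by
      nlinarith [sq_nonneg (Real.sqrt z * t / 2 - 1)]
    nlinarith [mul_le_mul_of_nonneg_left h1 hz.le]
  calc Real.exp (-z * Real.cosh t) ≤ Real.exp (1 + -z + -(Real.sqrt z) * t) := Real.exp_le_exp.mpr key
    _ = Real.exp 1 * Real.exp (-z) * Real.exp (-(Real.sqrt z) * t) := by
        rw [← Real.exp_add, ← Real.exp_add]
    _ ≤ 3 * Real.exp (-z) * Real.exp (-(Real.sqrt z) * t) := by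
        have h3 : Real.exp 1 ≤ 3 := by
          have := Real.exp_one_lt_d9
          linarith
        have p1 := Real.exp_pos (-z)
        have p2 := Real.exp_pos (-(Real.sqrt z) * t)
        nlinarith [mul_pos p1 p2]

lemma besselK1_integrable_bound (z : ℝ) (hz : 0 < z) :
    IntegrableOn (fun t => Real.exp (-z * Real.cosh t) * Real.cosh t) (Ioi 0) volume ∧
    besselK1 z ≤ Real.exp (-z) / z + 3 * Real.exp (-z) / Real.sqrt z := by
  have hsz : 0 < Real.sqrt z := Real.sqrt_pos.mpr hz
  -- majorant h
  set h : ℝ → ℝ := fun t => Real.exp (-z * Real.cosh t) * Real.sinh t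
      + 3 * Real.exp (-z) * Real.exp (-(Real.sqrt z) * t) with hh
  have hint2 : IntegrableOn (fun t => 3 * Real.exp (-z) * Real.exp (-(Real.sqrt z) * t)) (Ioi 0) volume := by
    have := (exp_neg_integrableOn_Ioi 0 hsz)
    exact this.const_mul _
  have hint : IntegrableOn h (Ioi 0) volume := (sinh_integral z hz).1.add hint2
  have hbound : ∀ t ∈ Ioi (0:ℝ), Real.exp (-z * Real.cosh t) * Real.cosh t ≤ h t := by
    intro t ht
    have ht' : (0:ℝ) ≤ t := le_of_lt ht
    have h1 : Real.cosh t ≤ Real.sinh t + 1 := by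
      have := Real.cosh_sub_sinh t
      have h2 : Real.exp (-t) ≤ 1 := Real.exp_le_one_iff.mpr (by linarith)
      linarith
    have h3 := exp_cosh_bound z t hz ht'
    have h4 : Real.exp (-z * Real.cosh t) * Real.cosh t
        ≤ Real.exp (-z * Real.cosh t) * (Real.sinh t + 1) := by
      exact mul_le_mul_of_nonneg_left h1 (Real.exp_pos _).le
    rw [hh]
    simp only []
    nlinarith [Real.exp_pos (-z * Real.cosh t)]
  have hcont : Continuous fun t => Real.exp (-z * Real.cosh t) * Real.cosh t := by
    continuity
  have hg_int : IntegrableOn (fun t => Real.exp (-z * Real.cosh t) * Real.cosh t) (Ioi 0) volume := by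
    refine hint.mono' hcont.aestronglyMeasurable ?_
    filter_upwards [ae_restrict_mem measurableSet_Ioi] with t ht
    rw [norm_of_nonneg (by positivity)]
    exact hbound t ht
  refine ⟨hg_int, ?_⟩
  have hIle : besselK1 z ≤ ∫ t in Ioi (0:ℝ), h t :=
    setIntegral_mono_on hg_int hint measurableSet_Ioi hbound
  have hval : (∫ t in Ioi (0:ℝ), h t) = Real.exp (-z) / z + 3 * Real.exp (-z) / Real.sqrt z := by
    rw [hh]
    rw [integral_add (sinh_integral z hz).1 hint2]
    rw [(sinh_integral z hz).2]
    rw [integral_const_mul, integral_exp_neg_mul _ hsz]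
    ring
  linarith

lemma besselK1_nonneg (z : ℝ) : 0 ≤ besselK1 z := by
  refine setIntegral_nonneg measurableSet_Ioi fun t _ => ?_
  have := Real.cosh_pos (x := t)
  positivity


lemma besselK1_antitoneOn (a : ℝ) (ha : 0 < a) :
    AntitoneOn (fun ξ => besselK1 (a * ξ)) (Ioi (0:ℝ)) := by
  intro x hx y hy hxy
  have hax : 0 < a * x := mul_pos ha hx
  have hay : 0 < a * y := mul_pos ha hy
  refine setIntegral_mono_on (besselK1_integrable_bound _ hay).1
    (besselK1_integrable_bound _ hax).1 measurableSet_Ioi fun t _ => ?_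
  have hc := Real.cosh_pos (x := t)
  have haxy : a * x ≤ a * y := mul_le_mul_of_nonneg_left hxy ha.le
  have : -(a * y) * Real.cosh t ≤ -(a * x) * Real.cosh t := by nlinarith
  exact mul_le_mul_of_nonneg_right (Real.exp_le_exp.mpr this) hc.le

lemma f_aemeasurable (a : ℝ) (ha : 0 < a) :
    AEMeasurable (fun ξ : ℝ => ξ * besselK1 (a * ξ) * besselI1 ξ * Real.log (besselI1 ξ))
      (volume.restrict (Ioi 0)) := by
  have h1 : AEMeasurable (fun ξ : ℝ => besselK1 (a * ξ)) (volume.restrict (Ioi 0)) :=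
    aemeasurable_restrict_of_antitoneOn measurableSet_Ioi (besselK1_antitoneOn a ha)
  have h2 : Measurable besselI1 := besselI1_monotone.measurable
  exact ((measurable_id.aemeasurable.mul h1).mul h2.aemeasurable).mul
    ((Real.measurable_log.comp h2).aemeasurable)


-- abs log bound on (0,1]
lemma neg_log_le (ξ : ℝ) (h0 : 0 < ξ) : -Real.log ξ ≤ 2 / Real.sqrt ξ - 2 := by
  have hs : 0 < Real.sqrt ξ := Real.sqrt_pos.mpr h0
  have h1 : Real.log (1 / Real.sqrt ξ) ≤ 1 / Real.sqrt ξ - 1 :=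
    Real.log_le_sub_one_of_pos (by positivity)
  rw [Real.log_div one_ne_zero (ne_of_gt hs), Real.log_one, Real.log_sqrt h0.le] at h1
  rw [show (2:ℝ)/Real.sqrt ξ = 2*(1/Real.sqrt ξ) by ring]
  linarith

/-- the integrand of F(ρ) is Lebesgue-integrable on (0,∞) for every ρ > 0. -/
theorem stmt_7 (ρ : ℝ) (hρ : 0 < ρ) :
    IntegrableOn
      (fun ξ : ℝ =>
        ξ * besselK1 (Real.sqrt (1 + ρ⁻¹) * ξ) * besselI1 ξ * Real.log (besselI1 ξ))
      (Ioi (0 : ℝ)) volume := by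
  set a : ℝ := Real.sqrt (1 + ρ⁻¹) with hadef
  have hρi : 0 < ρ⁻¹ := inv_pos.mpr hρ
  have ha1 : 1 < a := by
    rw [hadef]
    have : (1:ℝ) < 1 + ρ⁻¹ := by linarith
    nlinarith [Real.sq_sqrt (by linarith : (0:ℝ) ≤ 1 + ρ⁻¹), Real.sqrt_nonneg (1 + ρ⁻¹),
      Real.sqrt_le_sqrt (le_refl (1 + ρ⁻¹))]
  have ha0 : 0 < a := by linarith
  set c : ℝ := a - 1 with hcdef
  have hc : 0 < c := by simp [hcdef]; linarith
  set f : ℝ → ℝ := fun ξ => ξ * besselK1 (a * ξ) * besselI1 ξ * Real.log (besselI1 ξ) with hf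
  have hmeas := f_aemeasurable a ha0
  -- generic pointwise facts for ξ > 0
  have hfacts : ∀ ξ : ℝ, 0 < ξ →
      0 < besselI1 ξ ∧ Real.log (besselI1 ξ) ≤ ξ ∧ Real.log (ξ/2) ≤ Real.log (besselI1 ξ) ∧
      ξ * besselK1 (a * ξ) ≤ Real.exp (-(a*ξ)) * (1 + 3 * Real.sqrt ξ) := by
    intro ξ hξ
    have hI_low := besselI1_ge ξ hξ.le
    have hI_pos : 0 < besselI1 ξ := lt_of_lt_of_le (by linarith) hI_low
    have hI_hi := besselI1_le_exp ξ hξ.le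
    have hlog_hi : Real.log (besselI1 ξ) ≤ ξ := by
      calc Real.log (besselI1 ξ) ≤ Real.log (Real.exp ξ) := Real.log_le_log hI_pos hI_hi
        _ = ξ := Real.log_exp ξ
    have hlog_lo : Real.log (ξ/2) ≤ Real.log (besselI1 ξ) :=
      Real.log_le_log (by linarith) hI_low
    have haξ : 0 < a * ξ := mul_pos ha0 hξ
    have hK := (besselK1_integrable_bound (a*ξ) haξ).2
    have hsa : Real.sqrt (a*ξ) = Real.sqrt a * Real.sqrt ξ := Real.sqrt_mul ha0.le ξ
    have hsξ : 0 < Real.sqrt ξ := Real.sqrt_pos.mpr hξ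
    have hsa1 : 1 ≤ Real.sqrt a := by
      nlinarith [Real.sq_sqrt ha0.le, Real.sqrt_nonneg a]
    have hKb : ξ * besselK1 (a * ξ) ≤ Real.exp (-(a*ξ)) * (1 + 3 * Real.sqrt ξ) := by
      have h1 : ξ * besselK1 (a*ξ) ≤ ξ * (Real.exp (-(a*ξ)) / (a*ξ) + 3 * Real.exp (-(a*ξ)) / Real.sqrt (a*ξ)) :=
        mul_le_mul_of_nonneg_left hK hξ.le
      have he : 0 < Real.exp (-(a*ξ)) := Real.exp_pos _
      have hterm1 : ξ * (Real.exp (-(a*ξ)) / (a*ξ)) ≤ Real.exp (-(a*ξ)) := by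
        rw [div_eq_mul_inv]
        have : ξ * (a*ξ)⁻¹ ≤ 1 := by
          rw [mul_inv_le_iff₀ haξ]
          nlinarith
        nlinarith [mul_le_mul_of_nonneg_left this he.le]
      have hterm2 : ξ * (3 * Real.exp (-(a*ξ)) / Real.sqrt (a*ξ)) ≤ Real.exp (-(a*ξ)) * (3 * Real.sqrt ξ) := by
        rw [hsa, div_eq_mul_inv]
        have hξs : ξ = Real.sqrt ξ * Real.sqrt ξ := (Real.mul_self_sqrt hξ.le).symm
        have hinv : (Real.sqrt a * Real.sqrt ξ)⁻¹ ≤ (Real.sqrt ξ)⁻¹ := by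
          apply inv_anti₀ hsξ
          nlinarith
        calc ξ * (3 * Real.exp (-(a*ξ)) * (Real.sqrt a * Real.sqrt ξ)⁻¹)
            ≤ ξ * (3 * Real.exp (-(a*ξ)) * (Real.sqrt ξ)⁻¹) := by
              apply mul_le_mul_of_nonneg_left _ hξ.le
              apply mul_le_mul_of_nonneg_left hinv (by positivity)
          _ = Real.exp (-(a*ξ)) * (3 * Real.sqrt ξ) := by
              rw [hξs]; field_simp; nlinarith [Real.sq_sqrt hξ.le, Real.exp_pos (-(ξ*a)), Real.sqrt_sq hsξ.le]
      calc ξ * besselK1 (a*ξ) ≤ ξ * (Real.exp (-(a*ξ)) / (a*ξ)) + ξ * (3 * Real.exp (-(a*ξ)) / Real.sqrt (a*ξ)) := by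
            rw [← mul_add]; exact h1
        _ ≤ Real.exp (-(a*ξ)) + Real.exp (-(a*ξ)) * (3 * Real.sqrt ξ) := add_le_add hterm1 hterm2
        _ = Real.exp (-(a*ξ)) * (1 + 3 * Real.sqrt ξ) := by ring
    exact ⟨hI_pos, hlog_hi, hlog_lo, hKb⟩
  have habs : ∀ ξ : ℝ, 0 < ξ → ‖f ξ‖ = ξ * besselK1 (a*ξ) * besselI1 ξ * |Real.log (besselI1 ξ)| := by
    intro ξ hξ
    obtain ⟨hIpos, _, _, _⟩ := hfacts ξ hξ
    have hKp := besselK1_nonneg (a*ξ)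
    rw [hf]
    simp only [Real.norm_eq_abs, abs_mul]
    rw [abs_of_nonneg hξ.le, abs_of_nonneg hKp, abs_of_nonneg hIpos.le]
  have hlog2 : Real.log 2 ≤ 1 := by
    have := Real.log_le_sub_one_of_pos (by norm_num : (0:ℝ) < 2)
    linarith
  -- piece 1
  have hpiece1 : IntegrableOn f (Ioc 0 1) volume := by
    have hmaj : IntegrableOn (fun ξ : ℝ => 36 * ξ ^ (-(1/2) : ℝ)) (Ioc 0 1) volume := by
      have h := (intervalIntegral.integrableOn_Ioo_rpow_iff (s := (-(1/2) : ℝ)) one_pos).mpr (by norm_num)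
      exact (h.congr_set_ae Ioo_ae_eq_Ioc.symm).const_mul 36
    refine Integrable.mono' hmaj
      (hmeas.mono_measure (Measure.restrict_mono Ioc_subset_Ioi_self le_rfl)).aestronglyMeasurable ?_
    filter_upwards [ae_restrict_mem measurableSet_Ioc] with ξ hmem
    obtain ⟨h0, h1le⟩ := hmem
    obtain ⟨hIpos, hloghi, hloglo, hKb⟩ := hfacts ξ h0
    have hsξ : 0 < Real.sqrt ξ := Real.sqrt_pos.mpr h0
    have hsξ1 : Real.sqrt ξ ≤ 1 := Real.sqrt_le_one.mpr h1le
    have hsinv : 1 ≤ 1 / Real.sqrt ξ := by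
      rw [le_div_iff₀ hsξ]; linarith
    have hKb' : ξ * besselK1 (a*ξ) ≤ 4 := by
      have he : Real.exp (-(a*ξ)) ≤ 1 := Real.exp_le_one_iff.mpr (by nlinarith)
      have hp : 0 ≤ 1 + 3 * Real.sqrt ξ := by linarith
      nlinarith
    have hI3 : besselI1 ξ ≤ 3 := by
      have h1 := besselI1_le_exp ξ h0.le
      have h2 : Real.exp ξ ≤ Real.exp 1 := Real.exp_le_exp.mpr h1le
      have h3 := Real.exp_one_lt_d9
      linarith
    have hlogabs : |Real.log (besselI1 ξ)| ≤ 3 / Real.sqrt ξ := by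
      rw [abs_le]
      constructor
      · have hnl := neg_log_le ξ h0
        have : Real.log (ξ/2) = Real.log ξ - Real.log 2 :=
          Real.log_div (ne_of_gt h0) (by norm_num)
        rw [show (3:ℝ)/Real.sqrt ξ = 3*(1/Real.sqrt ξ) by ring]
        rw [show (2:ℝ)/Real.sqrt ξ = 2*(1/Real.sqrt ξ) by ring] at hnl
        linarith
      · rw [show (3:ℝ)/Real.sqrt ξ = 3*(1/Real.sqrt ξ) by ring]
        linarith
    rw [habs ξ h0]
    have hrw : (36:ℝ) * ξ ^ (-(1/2) : ℝ) = 36 / Real.sqrt ξ := by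
      rw [Real.rpow_neg h0.le, Real.sqrt_eq_rpow]
      ring
    rw [hrw]
    have hKI : ξ * besselK1 (a*ξ) * besselI1 ξ ≤ 12 := by
      nlinarith [besselK1_nonneg (a*ξ), mul_pos h0 (lt_of_le_of_lt (le_refl (0:ℝ)) h0)]
    have h12 : 0 ≤ ξ * besselK1 (a*ξ) * besselI1 ξ := by
      have := besselK1_nonneg (a*ξ); positivity
    calc ξ * besselK1 (a*ξ) * besselI1 ξ * |Real.log (besselI1 ξ)|
        ≤ 12 * (3 / Real.sqrt ξ) := mul_le_mul hKI hlogabs (abs_nonneg _) (by norm_num)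
      _ = 36 / Real.sqrt ξ := by ring
  -- piece 2
  have hpiece2 : IntegrableOn f (Ioi 1) volume := by
    have hc2 : 0 < c/2 := by linarith
    have hmaj : IntegrableOn (fun ξ : ℝ => 32 / c^2 * Real.exp (-(c/2) * ξ)) (Ioi 1) volume :=
      (exp_neg_integrableOn_Ioi 1 hc2).const_mul _
    refine Integrable.mono' hmaj
      (hmeas.mono_measure (Measure.restrict_mono (fun x (hx : 1 < x) => by
        exact lt_trans one_pos hx) le_rfl)).aestronglyMeasurable ?_
    filter_upwards [ae_restrict_mem measurableSet_Ioi] with ξ hmem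
    have h1ξ : (1:ℝ) < ξ := hmem
    have h0 : 0 < ξ := lt_trans one_pos h1ξ
    obtain ⟨hIpos, hloghi, hloglo, hKb⟩ := hfacts ξ h0
    have hsle : Real.sqrt ξ ≤ ξ := by
      nlinarith [Real.sq_sqrt h0.le, Real.sqrt_nonneg ξ]
    have hKb' : ξ * besselK1 (a*ξ) ≤ Real.exp (-(a*ξ)) * (4*ξ) := by
      have he := Real.exp_pos (-(a*ξ))
      nlinarith
    have hlogabs : |Real.log (besselI1 ξ)| ≤ ξ := by
      rw [abs_le]
      refine ⟨?_, hloghi⟩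
      have : Real.log (ξ/2) = Real.log ξ - Real.log 2 :=
        Real.log_div (ne_of_gt h0) (by norm_num)
      have hlξ : 0 ≤ Real.log ξ := Real.log_nonneg h1ξ.le
      linarith
    rw [habs ξ h0]
    have hIle := besselI1_le_exp ξ h0.le
    have step1 : ξ * besselK1 (a*ξ) * besselI1 ξ * |Real.log (besselI1 ξ)|
        ≤ (Real.exp (-(a*ξ)) * (4*ξ)) * Real.exp ξ * ξ := by
      have hKp := besselK1_nonneg (a*ξ)
      have h1 : ξ * besselK1 (a*ξ) * besselI1 ξ ≤ (Real.exp (-(a*ξ)) * (4*ξ)) * Real.exp ξ := by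
        have hxK : 0 ≤ ξ * besselK1 (a*ξ) := by positivity
        exact mul_le_mul hKb' hIle hIpos.le (by positivity)
      have h2 : 0 ≤ ξ * besselK1 (a*ξ) * besselI1 ξ := by positivity
      calc ξ * besselK1 (a*ξ) * besselI1 ξ * |Real.log (besselI1 ξ)|
          ≤ ((Real.exp (-(a*ξ)) * (4*ξ)) * Real.exp ξ) * ξ :=
            mul_le_mul h1 hlogabs (abs_nonneg _) (by positivity)
        _ = (Real.exp (-(a*ξ)) * (4*ξ)) * Real.exp ξ * ξ := by ring
    have step2 : (Real.exp (-(a*ξ)) * (4*ξ)) * Real.exp ξ * ξ = 4 * ξ^2 * Real.exp (-(c*ξ)) := by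
      rw [mul_comm (Real.exp (-(a*ξ)) * (4*ξ)) (Real.exp ξ)]
      rw [show Real.exp (-(a*ξ)) * (4*ξ) = 4*ξ * Real.exp (-(a*ξ)) by ring]
      rw [show Real.exp ξ * (4*ξ * Real.exp (-(a*ξ))) * ξ
          = 4*ξ^2 * (Real.exp ξ * Real.exp (-(a*ξ))) by ring]
      rw [← Real.exp_add, show ξ + -(a*ξ) = -(c*ξ) by rw [hcdef]; ring]
    have step3 : 4 * ξ^2 * Real.exp (-(c*ξ)) ≤ 32 / c^2 * Real.exp (-(c/2) * ξ) := by
      have hx : 0 ≤ (c/2)*ξ := by positivity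
      have hsum := Real.sum_le_exp_of_nonneg hx 3
      simp [Finset.sum_range_succ, Nat.factorial] at hsum
      have hξsq : ξ^2 ≤ 8/c^2 * Real.exp ((c/2)*ξ) := by
        have h1 : ((c/2)*ξ)^2/2 ≤ Real.exp ((c/2)*ξ) := by nlinarith [Real.exp_pos ((c/2)*ξ)]
        have h2 : c^2 > 0 := by positivity
        rw [div_mul_eq_mul_div, le_div_iff₀ h2]
        nlinarith
      have hsplit : Real.exp (-(c*ξ)) = Real.exp (-(c/2)*ξ) * Real.exp (-(c/2)*ξ) := by
        rw [← Real.exp_add]; congr 1; ring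
      have hprod : Real.exp ((c/2)*ξ) * Real.exp (-(c/2)*ξ) = 1 := by
        rw [← Real.exp_add]; simp
      have hep := Real.exp_pos (-(c/2)*ξ)
      have hem := Real.exp_pos ((c/2)*ξ)
      calc 4 * ξ^2 * Real.exp (-(c*ξ))
          ≤ 4 * (8/c^2 * Real.exp ((c/2)*ξ)) * Real.exp (-(c*ξ)) := by
            have := Real.exp_pos (-(c*ξ)); nlinarith
        _ = 32/c^2 * (Real.exp ((c/2)*ξ) * Real.exp (-(c/2)*ξ)) * Real.exp (-(c/2)*ξ) := by
            rw [hsplit]; ring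
        _ = 32 / c^2 * Real.exp (-(c/2) * ξ) := by rw [hprod]; ring
    calc ξ * besselK1 (a*ξ) * besselI1 ξ * |Real.log (besselI1 ξ)|
        ≤ (Real.exp (-(a*ξ)) * (4*ξ)) * Real.exp ξ * ξ := step1
      _ = 4 * ξ^2 * Real.exp (-(c*ξ)) := step2
      _ ≤ 32 / c^2 * Real.exp (-(c/2) * ξ) := step3
  have hunion : Ioc (0:ℝ) 1 ∪ Ioi 1 = Ioi 0 := Ioc_union_Ioi_eq_Ioi zero_le_one
  rw [hf] at hpiece1 hpiece2
  rw [← hunion]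
  exact hpiece1.union hpiece2
end
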